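/- arXiv:0910.5732 — 4 statements merged into one kernel-verified Lean document; each statement's English description precedes it below -/
import Mathlib

section
/- Let (W,S) be a Coxeter system of finite rank, and let (S1,S0,S2) be a separation of S such that S0 is complete. If T ⊆ S1 separates S1, then T separates S. -/
universe u

variable {W : Type u} [Group W]

/-- `S` is a set of Coxeter generators of `W`: `W` has the Coxeter presentation
`⟨S ∣ (st)^{m(s,t)} = 1⟩` whose simple reflections are the elements of `S`. -/
def IsCoxeterGeneratingSet (W : Type u) [Group W] (S : Set W) : Prop :=
  ∃ (M : CoxeterMatrix S) (cs : CoxeterSystem M W), ∀ s : S, cs.simple s = (s : W)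

/-- The presentation diagram of a Coxeter system, induced on the vertex set `A ⊆ W`:
distinct `s, t ∈ A` are adjacent exactly when `s * t` has finite order
(recall `orderOf x = 0` exactly when `x` has infinite order). -/
def presGraph (W : Type u) [Group W] (A : Set W) : SimpleGraph W where
  Adj s t := s ≠ t ∧ s ∈ A ∧ t ∈ A ∧ orderOf (s * t) ≠ 0
  symm := by
    constructor
    rintro s t ⟨h1, h2, h3, h4⟩
    refine ⟨h1.symm, h3, h2, ?_⟩
    have : SemiconjBy s (t * s) (s * t) := by unfold SemiconjBy; group
    rwa [this.orderOf_eq s]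
  loopless := by constructor; rintro s ⟨h, -⟩; exact h rfl

/-- `T` separates `R`: two elements of `R − T` lie in different connected components of the
induced subgraph of the presentation diagram on `R − T`. -/
def Separates (W : Type u) [Group W] (R T : Set W) : Prop :=
  ∃ a ∈ R \ T, ∃ b ∈ R \ T, ¬ (presGraph W (R \ T)).Reachable a b

/-- A subset `C` is complete if every product of two of its elements has finite order. -/
def IsCompleteSet (W : Type u) [Group W] (C : Set W) : Prop :=
  ∀ s ∈ C, ∀ t ∈ C, orderOf (s * t) ≠ 0

/-- `R` is separated by a complete subset of `R`. -/
def SeparatedByComplete (W : Type u) [Group W] (R : Set W) : Prop :=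
  ∃ T ⊆ R, IsCompleteSet W T ∧ Separates W R T

/-- `(S1, S0, S2)` is a separation of `S`. -/
def IsSeparation (W : Type u) [Group W] (S S1 S0 S2 : Set W) : Prop :=
  S1 ∪ S2 = S ∧ S1 ∩ S2 = S0 ∧ (S1 \ S0).Nonempty ∧ (S2 \ S0).Nonempty ∧
    ∀ a ∈ S1 \ S0, ∀ b ∈ S2 \ S0, orderOf (a * b) = 0

/-- `S0` is an `(a,b)`-separator of `S`: `a` and `b` lie in different connected components
of the induced subgraph of the presentation diagram on `S − S0`. -/
def IsABSeparator (W : Type u) [Group W] (S S0 : Set W) (a b : W) : Prop :=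
  a ∈ S \ S0 ∧ b ∈ S \ S0 ∧ ¬ (presGraph W (S \ S0)).Reachable a b

/-- `S0` is a relative minimal separator of `S`: a minimal `(a,b)`-separator of `S`
for some `a, b`. -/
def RelMinSeparator (W : Type u) [Group W] (S S0 : Set W) : Prop :=
  ∃ a b, IsABSeparator W S S0 a b ∧ ∀ T ⊂ S0, ¬ IsABSeparator W S T a b

/-- The set `wTw⁻¹`. -/
def conjSet (w : W) (T : Set W) : Set W := (fun x => w * x * w⁻¹) '' T

/-- `S0` is a c-minimal separator of `S`: `S0` separates `S` and no conjugate of a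
proper subset of `S0` that lies in `S` separates `S`. -/
def CMinSeparator (W : Type u) [Group W] (S S0 : Set W) : Prop :=
  Separates W S S0 ∧
    ¬ ∃ (w : W) (T : Set W), T ⊆ S0 ∧ T ≠ S0 ∧ conjSet w T ⊆ S ∧ Separates W S (conjSet w T)

/-- The union of the bags over the component of the tree `T` minus the edge `{u,v}`
containing `u`. -/
def edgeSide {W : Type u} [Group W] {V : Type} (T : SimpleGraph V) (bag : V → Set W)
    (u v : V) : Set W :=
  ⋃ w ∈ {w | (T.deleteEdges {s(u, v)}).Reachable u w}, bag w

/-- A visual tree decomposition of the Coxeter system `(W, S)`: a finite nonempty tree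
with bags `R_v ⊆ S` covering `S` such that for each edge `{u,v}`, the unions `A`, `B` of
bags over the two components of the tree minus the edge satisfy `A ∩ B = R_u ∩ R_v` and
`m(a,b) = ∞` for `a ∈ A − R_u ∩ R_v`, `b ∈ B − R_u ∩ R_v`.  This exhibits `W` as an
iterated visual amalgamated product of the groups `⟨R_v⟩` over the groups `⟨R_u ∩ R_v⟩`. -/
structure VisualTreeDecomp (W : Type u) [Group W] (S : Set W) where
  V : Type
  fintypeV : Fintype V
  T : SimpleGraph V
  isTree : T.IsTree
  bag : V → Set W
  bag_subset : ∀ v, bag v ⊆ S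
  bags_cover : (⋃ v, bag v) = S
  inter_eq : ∀ u v, T.Adj u v →
    edgeSide T bag u v ∩ edgeSide T bag v u = bag u ∩ bag v
  infinite_order : ∀ u v, T.Adj u v →
    ∀ a ∈ edgeSide T bag u v \ (bag u ∩ bag v),
      ∀ b ∈ edgeSide T bag v u \ (bag u ∩ bag v), orderOf (a * b) = 0

/-- A visual tree decomposition is reduced if each edge set is a proper subset of
the two incident bags. -/
def VisualTreeDecomp.Reduced {W : Type u} [Group W] {S : Set W}
    (D : VisualTreeDecomp W S) : Prop :=
  ∀ u v, D.T.Adj u v → D.bag u ∩ D.bag v ⊂ D.bag u ∧ D.bag u ∩ D.bag v ⊂ D.bag v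

/-- A group `G` has property FA if every action of `G` by graph automorphisms and
without inversions on a (nonempty) tree has a global fixed vertex. -/
def HasPropertyFA (G : Type u) [Group G] : Prop :=
  ∀ (V : Type u) (T : SimpleGraph V), T.IsTree →
    ∀ [MulAction G V],
      (∀ (g : G) (a b : V), T.Adj a b → T.Adj (g • a) (g • b)) →
      (¬ ∃ (g : G) (a b : V), T.Adj a b ∧ g • a = b ∧ g • b = a) →
      ∃ x : V, ∀ g : G, g • x = x

/-- The class 𝓕𝓐 of subgroups of `W`: those contained in a subgroup with property FA. -/
def MemFA {W : Type u} [Group W] (H : Subgroup W) : Prop :=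
  ∃ K : Subgroup W, H ≤ K ∧ HasPropertyFA K

/-- A chord of a closed walk: an edge of the graph between two vertices of the walk
that is not an edge of the walk. -/
def SimpleGraph.Walk.HasChord {V : Type*} {G : SimpleGraph V} {v : V} (c : G.Walk v v) : Prop :=
  ∃ a b, a ∈ c.support ∧ b ∈ c.support ∧ G.Adj a b ∧ s(a, b) ∉ c.edges

/-- A graph is chordal if every cycle of length at least four has a chord. -/
def SimpleGraph.IsChordalGraph {V : Type*} (G : SimpleGraph V) : Prop :=
  ∀ (v : V) (c : G.Walk v v), c.IsCycle → 4 ≤ c.length → c.HasChord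

/-- The set of all conjugates of elements of `S`. -/
def ConjugatesOf (W : Type u) [Group W] (S : Set W) : Set W :=
  {x | ∃ s ∈ S, ∃ w : W, x = w * s * w⁻¹}

/-- `S` is sharp-angled with respect to `S'`: every pair `s, t ∈ S` with `2 < m(s,t) < ∞`
is conjugate by a single element into `S'`. -/
def SharpAngled (W : Type u) [Group W] (S S' : Set W) : Prop :=
  ∀ s ∈ S, ∀ t ∈ S, 2 < orderOf (s * t) →
    ∃ w : W, w * s * w⁻¹ ∈ S' ∧ w * t * w⁻¹ ∈ S'

/-- `S''` is obtained from `S` by an elementary twist `(S1, ℓ, S2)`. -/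
def ElemTwist (W : Type u) [Group W] (S S'' : Set W) : Prop :=
  ∃ (S1 S2 : Set W) (ℓ : W), S1 ∪ S2 = S ∧
    (∀ a ∈ S1 \ (S1 ∩ S2), ∀ b ∈ S2 \ (S1 ∩ S2), orderOf (a * b) = 0) ∧
    ℓ ∈ Subgroup.closure (S1 ∩ S2) ∧ conjSet ℓ (S1 ∩ S2) = S1 ∩ S2 ∧
    S'' = S1 ∪ conjSet ℓ S2

/-- Two sets of Coxeter generators are twist equivalent if one is obtained from the
other by a finite sequence of elementary twists. -/
def TwistEquiv (W : Type u) [Group W] (S S' : Set W) : Prop :=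
  Relation.ReflTransGen (ElemTwist W) S S'

/-- `(W, S)` satisfies the twist conjecture: every set `S'` of Coxeter generators of `W`
consisting of conjugates of elements of `S`, with `S` sharp-angled with respect to `S'`,
is twist equivalent to `S`. -/
def SatisfiesTwistConjecture (W : Type u) [Group W] (S : Set W) : Prop :=
  ∀ S' : Set W, IsCoxeterGeneratingSet W S' → S' ⊆ ConjugatesOf W S →
    SharpAngled W S S' → TwistEquiv W S S'

/-! A walk in the diagram on `S − T` between two vertices of `S1` can only leave `S1` through
`S0`, since no vertex of `S1 − S0` is adjacent to one of `S2 − S0`. So if the component of `a`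
in the diagram on `S1 − T` misses `S0`, it is already a component of the diagram on `S − T`;
and if the components of `a` and `b` both meet `S0`, they coincide because `S0` is complete. -/

theorem SimpleGraph.Reachable.mem_of_adj_closed {V : Type*} {G : SimpleGraph V} {C : Set V}
    (hC : ∀ x y, x ∈ C → G.Adj x y → y ∈ C) {a b : V} (h : G.Reachable a b) (ha : a ∈ C) :
    b ∈ C := by
  rw [SimpleGraph.reachable_iff_reflTransGen] at h
  induction h with
  | refl => exact ha
  | tail _ hxy hx => exact hC _ _ hx hxy

theorem presGraph_adj {A : Set W} {s t : W} :
    (presGraph W A).Adj s t ↔ s ≠ t ∧ s ∈ A ∧ t ∈ A ∧ orderOf (s * t) ≠ 0 :=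
  Iff.rfl

theorem presGraph.mem_of_reachable {A : Set W} {a b : W} (h : (presGraph W A).Reachable a b)
    (ha : a ∈ A) : b ∈ A :=
  h.mem_of_adj_closed (fun _ _ _ hxy => (presGraph_adj.1 hxy).2.2.1) ha

namespace IsSeparation

variable {S S1 S0 S2 : Set W}

theorem middle_subset_left (hsep : IsSeparation W S S1 S0 S2) : S0 ⊆ S1 :=
  hsep.2.1 ▸ Set.inter_subset_left

theorem left_subset (hsep : IsSeparation W S S1 S0 S2) : S1 ⊆ S :=
  hsep.1 ▸ Set.subset_union_left

theorem mem_right_of_not_mem_left (hsep : IsSeparation W S S1 S0 S2) {x : W} (hx : x ∈ S)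
    (hx1 : x ∉ S1) : x ∈ S2 \ S0 :=
  ⟨(hsep.1 ▸ hx : x ∈ S1 ∪ S2).resolve_left hx1, fun hx0 => hx1 (hsep.middle_subset_left hx0)⟩

theorem reachable_left_of_reachable (hsep : IsSeparation W S S1 S0 S2) {T : Set W} {a b : W}
    (ha : a ∈ S1 \ T) (hS0 : ∀ x, (presGraph W (S1 \ T)).Reachable a x → x ∉ S0)
    (hab : (presGraph W (S \ T)).Reachable a b) : (presGraph W (S1 \ T)).Reachable a b := by
  refine hab.mem_of_adj_closed (C := {x | (presGraph W (S1 \ T)).Reachable a x})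
    (fun x y hax hxy => ?_) (SimpleGraph.Reachable.refl a)
  obtain ⟨hxy, -, hy, hord⟩ := presGraph_adj.1 hxy
  have hx1 : x ∈ S1 \ T := presGraph.mem_of_reachable hax ha
  by_cases hy1 : y ∈ S1
  · exact hax.trans (SimpleGraph.Adj.reachable ⟨hxy, hx1, ⟨hy1, hy.2⟩, hord⟩)
  · exact absurd (hsep.2.2.2.2 x ⟨hx1.1, hS0 x hax⟩ y (hsep.mem_right_of_not_mem_left hy.1 hy1))
      hord

end IsSeparation

theorem IsCompleteSet.reachable {A C T : Set W} (hC : IsCompleteSet W C) (hCA : C ⊆ A) {s t : W}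
    (hs : s ∈ C \ T) (ht : t ∈ C \ T) : (presGraph W (A \ T)).Reachable s t := by
  by_cases hst : s = t
  · exact hst ▸ SimpleGraph.Reachable.refl s
  · exact SimpleGraph.Adj.reachable
      ⟨hst, ⟨hCA hs.1, hs.2⟩, ⟨hCA ht.1, ht.2⟩, hC s hs.1 t ht.1⟩

theorem separates_of_separates_side_general {W : Type u} [Group W] (S S1 S0 S2 T : Set W)
    (hsep : IsSeparation W S S1 S0 S2) (hS0 : IsCompleteSet W S0)
    (hTsep : Separates W S1 T) :
    Separates W S T := by
  obtain ⟨a, ha, b, hb, hab⟩ := hTsep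
  refine ⟨a, ⟨hsep.left_subset ha.1, ha.2⟩, b, ⟨hsep.left_subset hb.1, hb.2⟩, fun hreach => hab ?_⟩
  by_cases hsa : ∃ s, (presGraph W (S1 \ T)).Reachable a s ∧ s ∈ S0
  · by_cases htb : ∃ t, (presGraph W (S1 \ T)).Reachable b t ∧ t ∈ S0
    · obtain ⟨s, has, hs⟩ := hsa
      obtain ⟨t, hbt, ht⟩ := htb
      have hst := hS0.reachable hsep.middle_subset_left ⟨hs, (presGraph.mem_of_reachable has ha).2⟩
        ⟨ht, (presGraph.mem_of_reachable hbt hb).2⟩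
      exact has.trans (hst.trans hbt.symm)
    · push Not at htb
      exact (hsep.reachable_left_of_reachable hb htb hreach.symm).symm
  · push Not at hsa
    exact hsep.reachable_left_of_reachable ha hsa hreach

/-- Lemma 2.1. Let `(W,S)` be a Coxeter system of finite rank, and let
`(S1,S0,S2)` be a separation of `S` such that `S0` is complete.  If `T ⊆ S1` separates
`S1`, then `T` separates `S`. -/
theorem separates_of_separates_side {W : Type u} [Group W] (S S1 S0 S2 T : Set W)
    (hcox : IsCoxeterGeneratingSet W S) (hfin : S.Finite)
    (hsep : IsSeparation W S S1 S0 S2) (hS0 : IsCompleteSet W S0)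
    (hT : T ⊆ S1) (hTsep : Separates W S1 T) :
    Separates W S T :=
  separates_of_separates_side_general S S1 S0 S2 T hsep hS0 hTsep
end

section
/- Let (W,S) be a Coxeter system of finite rank, and fix a reduced visual tree decomposition of (W,S) such that every bag R_v is not separated by any complete subset of R_v and every edge set R_u ∩ R_v is complete. Then a subset R ⊆ S is a bag of this decomposition if and only if R is a maximal subset of S that is not separated by a complete subset of R (i.e., no complete subset of R separates R, and R is maximal under inclusion among subsets of S with this property). -/
universe u

variable {W : Type u} [Group W]

/-!
For every edge of the tree the edge set `R_u ∩ R_v` is complete and separates the two sides,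
so a set not separated by a complete subset lies on one side of every edge. Orienting each
edge towards such a side, some vertex of the finite tree has all its edges pointing towards
it, and the set lies in that vertex's bag. Bags are themselves unseparated, and in a reduced
decomposition no bag contains another; both directions follow.
-/

namespace SimpleGraph

variable {V : Type*} {G : SimpleGraph V}

theorem Reachable.deleteEdges_or (v : V) {u w : V} (h : G.Reachable u w) :
    (G.deleteEdges {s(u, v)}).Reachable u w ∨ (G.deleteEdges {s(u, v)}).Reachable v w := by
  rw [reachable_iff_reflTransGen] at h
  induction h with
  | refl => exact Or.inl .rfl
  | @tail x y _ hxy ih =>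
    by_cases he : s(x, y) = s(u, v)
    · rcases Sym2.eq_iff.mp he with ⟨rfl, rfl⟩ | ⟨rfl, rfl⟩
      · exact Or.inr .rfl
      · exact Or.inl .rfl
    · have hadj : (G.deleteEdges {s(u, v)}).Adj x y :=
        deleteEdges_adj.mpr ⟨hxy, by simpa using he⟩
      exact ih.imp (·.trans hadj.reachable) (·.trans hadj.reachable)

theorem Reachable.exists_adj_reachable_deleteEdges {v u : V} (h : G.Reachable v u)
    (hne : v ≠ u) : ∃ w, G.Adj v w ∧ (G.deleteEdges {s(w, v)}).Reachable w u := by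
  classical
  obtain ⟨p, hp⟩ := h.some.toPath
  cases p with
  | nil => exact absurd rfl hne
  | @cons _ w _ hadj q =>
    refine ⟨w, hadj, reachable_deleteEdges_iff_exists_walk.mpr ⟨q, fun hq => ?_⟩⟩
    exact (Walk.cons_isPath_iff _ _).mp hp |>.2 (q.snd_mem_support_of_mem_edges hq)

/-- If every vertex had an edge `vw` with `¬ P v w`, choosing one at each vertex would inject
the vertices into the edges of the tree. -/
theorem IsTree.exists_forall_adj [Finite V] (hG : G.IsTree) (P : V → V → Prop)
    (hP : ∀ u v, G.Adj u v → P u v ∨ P v u) : ∃ v, ∀ w, G.Adj v w → P v w := by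
  by_contra! h
  choose g hadj hP' using h
  let f : V → G.edgeSet := fun v => ⟨s(v, g v), hadj v⟩
  have hf : Function.Injective f := by
    intro v v' hvv'
    rcases Sym2.eq_iff.mp (Subtype.ext_iff.mp hvv') with ⟨h, -⟩ | ⟨h₁, h₂⟩
    · exact h
    · rcases hP v (g v) (hadj v) with hvg | hgv
      · exact absurd hvg (hP' v)
      · rw [h₂, h₁] at hgv
        exact absurd hgv (hP' v')
  have := Nat.card_le_card_of_injective f hf
  have := (isTree_iff_connected_and_card.mp hG).2
  omega

end SimpleGraph

theorem mem_diff_of_presGraph_reachable {A B R : Set W} (hRAB : R ⊆ A ∪ B)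
    (hinf : ∀ a ∈ A \ B, ∀ b ∈ B \ A, orderOf (a * b) = 0) {x y : W}
    (hxy : (presGraph W (R \ (A ∩ B))).Reachable x y) (hx : x ∈ A \ B) : y ∈ A \ B := by
  rw [SimpleGraph.reachable_iff_reflTransGen] at hxy
  induction hxy with
  | refl => exact hx
  | @tail y z _ hyz hy =>
    obtain ⟨-, -, ⟨hzR, hzAB⟩, hord⟩ := hyz
    rcases hRAB hzR with hzA | hzB
    · exact ⟨hzA, fun hzB => hzAB ⟨hzA, hzB⟩⟩
    · exact absurd (hinf y hy z ⟨hzB, fun hzA => hzAB ⟨hzA, hzB⟩⟩) hord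

theorem subset_or_subset_of_not_separatedByComplete {A B R : Set W}
    (hR : ¬ SeparatedByComplete W R) (hRAB : R ⊆ A ∪ B) (hAB : IsCompleteSet W (A ∩ B))
    (hinf : ∀ a ∈ A \ B, ∀ b ∈ B \ A, orderOf (a * b) = 0) : R ⊆ A ∨ R ⊆ B := by
  by_contra! h
  obtain ⟨a, haR, haA⟩ := Set.not_subset.mp h.1
  obtain ⟨b, hbR, hbB⟩ := Set.not_subset.mp h.2
  have hbA : b ∈ A := (hRAB hbR).resolve_right hbB
  have hdiff : R \ (A ∩ B ∩ R) = R \ (A ∩ B) := by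
    ext; simp only [Set.mem_sdiff, Set.mem_inter_iff]; tauto
  refine hR ⟨A ∩ B ∩ R, Set.inter_subset_right, fun s hs t ht => hAB s hs.1 t ht.1, ?_⟩
  rw [Separates, hdiff]
  exact ⟨b, ⟨hbR, fun h => hbB h.2⟩, a, ⟨haR, fun h => haA h.1⟩,
    fun hba => haA (mem_diff_of_presGraph_reachable hRAB hinf hba ⟨hbA, hbB⟩).1⟩

namespace VisualTreeDecomp

variable {S : Set W} (D : VisualTreeDecomp W S)

theorem exists_mem_bag {x : W} (hx : x ∈ S) : ∃ v, x ∈ D.bag v :=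
  Set.mem_iUnion.mp (D.bags_cover.symm ▸ hx)

theorem bag_subset_edgeSide {u v w : D.V} (h : (D.T.deleteEdges {s(u, v)}).Reachable u w) :
    D.bag w ⊆ edgeSide D.T D.bag u v :=
  Set.subset_biUnion_of_mem (u := D.bag) h

theorem subset_edgeSide_union (u v : D.V) :
    S ⊆ edgeSide D.T D.bag u v ∪ edgeSide D.T D.bag v u := by
  intro x hx
  obtain ⟨w, hw⟩ := D.exists_mem_bag hx
  rcases (D.isTree.connected u w).deleteEdges_or v with h | h
  · exact Or.inl (D.bag_subset_edgeSide h hw)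
  · rw [Sym2.eq_swap] at h
    exact Or.inr (D.bag_subset_edgeSide h hw)

theorem subset_or_subset_edgeSide
    (hedge : ∀ u v, D.T.Adj u v → IsCompleteSet W (D.bag u ∩ D.bag v))
    {R : Set W} (hRS : R ⊆ S) (hR : ¬ SeparatedByComplete W R) {u v : D.V} (huv : D.T.Adj u v) :
    R ⊆ edgeSide D.T D.bag u v ∨ R ⊆ edgeSide D.T D.bag v u := by
  have hAB := D.inter_eq u v huv
  refine subset_or_subset_of_not_separatedByComplete hR
    (hRS.trans (D.subset_edgeSide_union u v)) (hAB ▸ hedge u v huv) ?_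
  simpa only [← hAB, Set.sdiff_self_inter, Set.sdiff_inter_self_eq_sdiff] using
    D.infinite_order u v huv

theorem exists_adj_bag_subset_edgeSide {v u : D.V} (hne : v ≠ u) :
    ∃ w, D.T.Adj v w ∧ D.bag u ⊆ edgeSide D.T D.bag w v := by
  obtain ⟨w, hadj, hreach⟩ := (D.isTree.connected v u).exists_adj_reachable_deleteEdges hne
  exact ⟨w, hadj, D.bag_subset_edgeSide hreach⟩

theorem exists_subset_bag (hedge : ∀ u v, D.T.Adj u v → IsCompleteSet W (D.bag u ∩ D.bag v))
    {R : Set W} (hRS : R ⊆ S) (hR : ¬ SeparatedByComplete W R) : ∃ v, R ⊆ D.bag v := by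
  have := D.fintypeV
  obtain ⟨v, hv⟩ := D.isTree.exists_forall_adj _ fun u w huw =>
    D.subset_or_subset_edgeSide hedge hRS hR huw
  refine ⟨v, fun x hx => ?_⟩
  obtain ⟨u, hu⟩ := D.exists_mem_bag (hRS hx)
  obtain rfl | hne := eq_or_ne v u
  · exact hu
  -- `x` lies on both sides of the first edge from `v` towards `u`, hence in its edge set.
  obtain ⟨w, hadj, hsub⟩ := D.exists_adj_bag_subset_edgeSide hne
  have hxvw : x ∈ D.bag v ∩ D.bag w := D.inter_eq v w hadj ▸ ⟨hv w hadj hx, hsub hu⟩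
  exact hxvw.1

theorem eq_of_bag_subset_bag (hred : D.Reduced) {v u : D.V} (h : D.bag v ⊆ D.bag u) :
    v = u := by
  by_contra hne
  obtain ⟨w, hadj, hsub⟩ := D.exists_adj_bag_subset_edgeSide hne
  have : D.bag v ⊆ D.bag v ∩ D.bag w := D.inter_eq v w hadj ▸
    Set.subset_inter (D.bag_subset_edgeSide .rfl) (h.trans hsub)
  exact (hred v w hadj).1.not_subset this

end VisualTreeDecomp

theorem bag_iff_maximal_unseparated_general {W : Type u} [Group W] (S : Set W)
    (D : VisualTreeDecomp W S) (hred : D.Reduced)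
    (hbag : ∀ v, ¬ SeparatedByComplete W (D.bag v))
    (hedge : ∀ u v, D.T.Adj u v → IsCompleteSet W (D.bag u ∩ D.bag v))
    (R : Set W) :
    (∃ v, D.bag v = R) ↔
      (R ⊆ S ∧ ¬ SeparatedByComplete W R ∧
        ∀ R', R ⊆ R' → R' ⊆ S → ¬ SeparatedByComplete W R' → R' = R) := by
  constructor
  · rintro ⟨v, rfl⟩
    refine ⟨D.bag_subset v, hbag v, fun R' hvR' hR'S hR' => ?_⟩
    obtain ⟨u, hR'u⟩ := D.exists_subset_bag hedge hR'S hR'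
    obtain rfl := D.eq_of_bag_subset_bag hred (hvR'.trans hR'u)
    exact hR'u.antisymm hvR'
  · rintro ⟨hRS, hR, hmax⟩
    obtain ⟨v, hRv⟩ := D.exists_subset_bag hedge hRS hR
    exact ⟨v, hmax (D.bag v) hRv (D.bag_subset v) (hbag v)⟩

/-- part of Theorem 2.5. Fix a reduced visual tree decomposition of a
finite rank Coxeter system `(W,S)` with no bag separated by a complete subset and all
edge sets complete.  Then `R ⊆ S` is a bag if and only if `R` is a maximal subset of `S`
not separated by a complete subset. -/
theorem bag_iff_maximal_unseparated {W : Type u} [Group W] (S : Set W)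
    (hcox : IsCoxeterGeneratingSet W S) (hfin : S.Finite)
    (D : VisualTreeDecomp W S) (hred : D.Reduced)
    (hbag : ∀ v, ¬ SeparatedByComplete W (D.bag v))
    (hedge : ∀ u v, D.T.Adj u v → IsCompleteSet W (D.bag u ∩ D.bag v))
    (R : Set W) :
    (∃ v, D.bag v = R) ↔
      (R ⊆ S ∧ ¬ SeparatedByComplete W R ∧
        ∀ R', R ⊆ R' → R' ⊆ S → ¬ SeparatedByComplete W R' → R' = R) :=
  bag_iff_maximal_unseparated_general S D hred hbag hedge R
end

section
/- Let (W,S) be a Coxeter system of finite rank, and let (A,C,B) be a separation of S with C complete such that the visual subgroup ⟨C⟩ has index two in ⟨A⟩ and index two in ⟨B⟩. Then there exist a, b ∈ S with A − C = {a} and B − C = {b}, every element of C commutes with a and with b (so that ⟨A⟩ is the internal direct product ⟨a⟩ × ⟨C⟩ and ⟨B⟩ is the internal direct product ⟨b⟩ × ⟨C⟩), the sets A and B are complete, and C is the unique subset of S that separates S. -/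
universe u

variable {W : Type u} [Group W]

/-!
Index two forces products into `⟨C⟩`: for distinct `x, y ∈ A − C` we get `x * y ∈ ⟨C⟩`, and for
`x ∈ A − C`, `c ∈ C` also `x * (c * x) ∈ ⟨C⟩`. A generator `x ∉ C` is never a left inversion of an
element of the parabolic subgroup `⟨C⟩` (strong exchange), so `ℓ(x y) < ℓ(y) = 1` gives `x = y`, and
`ℓ(x c x) < ℓ(c x)` makes `x` a left inversion of the word `c x`, i.e. `x ∈ {c, c x c}`. Hence
`A = C ∪ {a}` and `B = C ∪ {b}` with `a, b` centralising `C`; then `{a, b}` is the only pair of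
generators with `m = ∞`, which makes `C` the unique separator.

Strong exchange comes from the sign representation of `W` on `W × ℤˣ`: its existence shows that the
parity of the number of occurrences of `t` in the left inversion sequence of a word depends only on
the element the word represents.
-/

namespace CoxeterSystem

open List

variable {B : Type*} {M : CoxeterMatrix B} (cs : CoxeterSystem M W)

theorem conj_simple_eq_simple_iff (i : B) (t : W) :
    MulAut.conj (cs.simple i) t = cs.simple i ↔ t = cs.simple i := by
  have hfix : MulAut.conj (cs.simple i) (cs.simple i) = cs.simple i := by
    simp [cs.inv_simple, cs.simple_mul_simple_self]
  calc _ ↔ MulAut.conj (cs.simple i) t = MulAut.conj (cs.simple i) (cs.simple i) := by rw [hfix]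
    _ ↔ _ := (MulAut.conj _).injective.eq_iff

theorem leftInvSeq_append (α β : List B) :
    cs.leftInvSeq (α ++ β) =
      cs.leftInvSeq α ++ (cs.leftInvSeq β).map (MulAut.conj (cs.wordProd α)) := by
  induction α with
  | nil => simp
  | cons i α ih =>
    simp [leftInvSeq, ih, cs.wordProd_cons, Function.comp_def]

section Sign

open scoped Classical

noncomputable def leftInvSeqSign (ω : List B) (t : W) : ℤˣ := (-1) ^ (cs.leftInvSeq ω).count t

theorem leftInvSeqSign_append (α β : List B) (t : W) :
    cs.leftInvSeqSign (α ++ β) t =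
      cs.leftInvSeqSign α t * cs.leftInvSeqSign β (MulAut.conj (cs.wordProd α)⁻¹ t) := by
  have ht : t = MulAut.conj (cs.wordProd α) (MulAut.conj (cs.wordProd α)⁻¹ t) := by
    simp only [MulAut.conj_apply]; group
  unfold leftInvSeqSign
  conv_lhs => rw [leftInvSeq_append, count_append, pow_add]
  conv_lhs => enter [2, 2]; rw [ht, count_map_of_injective _ _ (MulAut.conj _).injective]

theorem leftInvSeqSign_cons (i : B) (ω : List B) (t : W) :
    cs.leftInvSeqSign (i :: ω) t =
      (if t = cs.simple i then -1 else 1) * cs.leftInvSeqSign ω (MulAut.conj (cs.simple i) t) := by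
  rw [← singleton_append, leftInvSeqSign_append, wordProd_singleton, inv_simple]
  by_cases h : t = cs.simple i
  · simp [leftInvSeqSign, h]
  · simp [leftInvSeqSign, h, Ne.symm h]

theorem conj_simple_conj_simple (i : B) (t : W) :
    MulAut.conj (cs.simple i) (MulAut.conj (cs.simple i) t) = t := by
  rw [← MulAut.mul_apply, ← map_mul, simple_mul_simple_self, map_one, MulAut.one_apply]

noncomputable def signPerm (i : B) : Equiv.Perm (W × ℤˣ) :=
  Function.Involutive.toPerm
    (fun p => (MulAut.conj (cs.simple i) p.1, (if p.1 = cs.simple i then -1 else 1) * p.2)) <| by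
      rintro ⟨t, ε⟩
      refine Prod.ext (cs.conj_simple_conj_simple i t) ?_
      dsimp only
      rw [conj_simple_eq_simple_iff]
      split_ifs <;> simp

theorem signPerm_apply (i : B) (t : W) (ε : ℤˣ) :
    cs.signPerm i (t, ε) =
      (MulAut.conj (cs.simple i) t, (if t = cs.simple i then -1 else 1) * ε) := rfl

noncomputable def wordSignPerm (ω : List B) : Equiv.Perm (W × ℤˣ) := (ω.map cs.signPerm).prod

theorem wordSignPerm_apply (ω : List B) (t : W) (ε : ℤˣ) :
    cs.wordSignPerm ω (t, ε) =
      (MulAut.conj (cs.wordProd ω) t,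
        cs.leftInvSeqSign ω (MulAut.conj (cs.wordProd ω) t) * ε) := by
  induction ω with
  | nil => simp [wordSignPerm, leftInvSeqSign]
  | cons i ω ih =>
    have hprod : wordSignPerm cs (i :: ω) = cs.signPerm i * cs.wordSignPerm ω := rfl
    rw [hprod, Equiv.Perm.mul_apply, ih, signPerm_apply, wordProd_cons, map_mul,
      MulAut.mul_apply, leftInvSeqSign_cons, conj_simple_eq_simple_iff, conj_simple_conj_simple,
      mul_assoc]

theorem wordSignPerm_alternatingWord (i j : B) (p : ℕ) :
    cs.wordSignPerm (alternatingWord i j (2 * p)) = (cs.signPerm i * cs.signPerm j) ^ p := by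
  induction p with
  | zero => rfl
  | succ p ih =>
    have hword : alternatingWord i j (2 * (p + 1)) = i :: j :: alternatingWord i j (2 * p) := by
      rw [show 2 * (p + 1) = 2 * p + 1 + 1 by ring, alternatingWord_succ',
        alternatingWord_succ']
      simp
    rw [hword, pow_succ', mul_assoc, ← ih]
    rfl

theorem leftInvSeq_alternatingWord (i j : B) (p : ℕ) :
    cs.leftInvSeq (alternatingWord i j (2 * p)) =
      (range (2 * p)).map fun k => cs.simple i * (cs.simple j * cs.simple i) ^ k := by
  refine ext_getElem (by simp) fun k hk _ => ?_
  rw [getElem_leftInvSeq_alternatingWord cs i j p k (by simpa using hk),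
    prod_alternatingWord_eq_mul_pow]
  simp [Nat.not_even_bit1, show (2 * k + 1) / 2 = k by omega]

theorem even_count_leftInvSeq_alternatingWord (i j : B) (t : W) :
    Even ((cs.leftInvSeq (alternatingWord i j (2 * M i j))).count t) := by
  have hper : (fun k => cs.simple i * (cs.simple j * cs.simple i) ^ k) ∘ (M i j + ·) =
      fun k => cs.simple i * (cs.simple j * cs.simple i) ^ k := by
    ext k; simp [pow_add]
  rw [leftInvSeq_alternatingWord, two_mul, range_add, map_append, map_map, hper, count_append]
  exact ⟨_, rfl⟩

theorem signPerm_isLiftable : M.IsLiftable cs.signPerm := by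
  intro i j
  ext ⟨t, ε⟩ : 1
  rw [← wordSignPerm_alternatingWord, wordSignPerm_apply, prod_alternatingWord_eq_mul_pow]
  have hsign : cs.leftInvSeqSign (alternatingWord i j (2 * M i j)) t = 1 :=
    (cs.even_count_leftInvSeq_alternatingWord i j t).neg_one_pow
  simp [hsign, simple_mul_simple_pow]

noncomputable def signRep : W →* Equiv.Perm (W × ℤˣ) :=
  cs.lift ⟨cs.signPerm, cs.signPerm_isLiftable⟩

theorem signRep_wordProd (ω : List B) : cs.signRep (cs.wordProd ω) = cs.wordSignPerm ω := by
  simp [signRep, wordProd, wordSignPerm, map_list_prod, Function.comp_def]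

theorem leftInvSeqSign_eq_of_wordProd_eq {ω₁ ω₂ : List B}
    (h : cs.wordProd ω₁ = cs.wordProd ω₂) (t : W) :
    cs.leftInvSeqSign ω₁ t = cs.leftInvSeqSign ω₂ t := by
  have hperm : cs.wordSignPerm ω₁ = cs.wordSignPerm ω₂ := by
    rw [← signRep_wordProd, ← signRep_wordProd, h]
  simpa only [wordSignPerm_apply, h, MulAut.apply_inv_self, mul_one] using
    congrArg (fun f => (f ((MulAut.conj (cs.wordProd ω₂))⁻¹ t, 1)).2) hperm

theorem leftInvSeqSign_of_notMem {ω : List B} {t : W} (ht : t ∉ cs.leftInvSeq ω) :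
    cs.leftInvSeqSign ω t = 1 := by
  simp [leftInvSeqSign, count_eq_zero_of_not_mem ht]

theorem leftInvSeqSign_self_of_isReflection {ω : List B} (ht : cs.IsReflection (cs.wordProd ω)) :
    cs.leftInvSeqSign ω (cs.wordProd ω) = -1 := by
  obtain ⟨v, i, hv⟩ := ht
  obtain ⟨ρ, rfl⟩ := cs.wordProd_surjective v
  have hconj : MulAut.conj (cs.wordProd ρ)⁻¹ (cs.wordProd ω) = cs.simple i := by
    rw [hv, MulAut.conj_apply]; group
  have hfix : MulAut.conj (cs.simple i) (cs.simple i) = cs.simple i := by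
    rw [conj_simple_eq_simple_iff]
  have hone :
      cs.leftInvSeqSign ρ (cs.wordProd ω) * cs.leftInvSeqSign ρ.reverse (cs.simple i) = 1 := by
    rw [← hconj, ← leftInvSeqSign_append,
      cs.leftInvSeqSign_eq_of_wordProd_eq (ω₂ := [])
      (by rw [wordProd_append, wordProd_reverse, mul_inv_cancel, wordProd_nil])]
    rfl
  rw [cs.leftInvSeqSign_eq_of_wordProd_eq (ω₂ := ρ ++ i :: ρ.reverse)
      (by rw [hv, wordProd_append, wordProd_cons, wordProd_reverse, mul_assoc]),
    leftInvSeqSign_append, hconj, leftInvSeqSign_cons, hfix, if_pos rfl, neg_one_mul, mul_neg, hone]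

/-- The strong exchange property. -/
theorem mem_leftInvSeq_of_isLeftInversion {ω : List B} {t : W}
    (ht : cs.IsLeftInversion (cs.wordProd ω) t) : t ∈ cs.leftInvSeq ω := by
  obtain ⟨β, hβ, htω⟩ := cs.exists_isReduced (t * cs.wordProd ω)
  obtain ⟨ρ, rfl⟩ := cs.wordProd_surjective t
  have hβt : cs.wordProd ρ ∉ cs.leftInvSeq β := fun hmem => by
    have := (cs.isLeftInversion_of_mem_leftInvSeq hβ hmem).2
    rw [← htω, ← mul_assoc, ht.1.mul_self, one_mul] at this
    exact lt_asymm this ht.2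
  have hsign : cs.leftInvSeqSign ω (cs.wordProd ρ) = -1 := by
    have hprod : cs.wordProd (ρ ++ β) = cs.wordProd ω := by
      rw [wordProd_append, ← htω, ← mul_assoc, ht.1.mul_self, one_mul]
    have hconj : MulAut.conj (cs.wordProd ρ)⁻¹ (cs.wordProd ρ) = cs.wordProd ρ := by
      simp
    rw [← cs.leftInvSeqSign_eq_of_wordProd_eq hprod, leftInvSeqSign_append, hconj,
      leftInvSeqSign_of_notMem cs hβt, mul_one, leftInvSeqSign_self_of_isReflection cs ht.1]
  by_contra hmem
  rw [leftInvSeqSign_of_notMem cs hmem] at hsign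
  exact absurd hsign (by decide)

end Sign

variable {T : Set B}

theorem exists_isReduced_simple_mul {i : B} (hi : i ∈ T) {ω : List B}
    (hωT : ∀ j ∈ ω, j ∈ T) (hω : cs.IsReduced ω) :
    ∃ ω' : List B, (∀ j ∈ ω', j ∈ T) ∧ cs.IsReduced ω' ∧
      cs.wordProd ω' = cs.simple i * cs.wordProd ω := by
  rcases cs.length_simple_mul (cs.wordProd ω) i with hlen | hlen
  · refine ⟨i :: ω, by simpa [hi] using hωT, ?_, cs.wordProd_cons i ω⟩
    rw [IsReduced, wordProd_cons, hlen, hω.eq, length_cons]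
  · have hmem :=
      cs.mem_leftInvSeq_of_isLeftInversion (ω := ω) ⟨cs.isReflection_simple i, by omega⟩
    obtain ⟨j, hj, hget⟩ := mem_iff_getElem.mp hmem
    rw [length_leftInvSeq] at hj
    have herase : cs.wordProd (ω.eraseIdx j) = cs.simple i * cs.wordProd ω := by
      rw [← getD_leftInvSeq_mul_wordProd, getD_eq_getElem _ _ (by simpa using hj), hget]
    refine ⟨ω.eraseIdx j, fun k hk => hωT k (mem_of_mem_eraseIdx hk), ?_, herase⟩
    rw [IsReduced, herase, length_eraseIdx_of_lt hj]
    have := hω.eq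
    omega

theorem exists_isReduced_of_mem_closure {w : W} (hw : w ∈ Subgroup.closure (cs.simple '' T)) :
    ∃ ω : List B, (∀ i ∈ ω, i ∈ T) ∧ cs.IsReduced ω ∧ cs.wordProd ω = w := by
  induction hw using Subgroup.closure_induction_left with
  | one => exact ⟨[], by simp, by simp [IsReduced], rfl⟩
  | mul_left x hx y _ ih =>
    obtain ⟨i, hi, rfl⟩ := hx
    obtain ⟨ω, hωT, hω, rfl⟩ := ih
    exact cs.exists_isReduced_simple_mul hi hωT hω
  | inv_mul_cancel x hx y _ ih =>
    obtain ⟨i, hi, rfl⟩ := hx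
    obtain ⟨ω, hωT, hω, rfl⟩ := ih
    rw [inv_simple]
    exact cs.exists_isReduced_simple_mul hi hωT hω

theorem mem_closure_of_mem_leftInvSeq {ω : List B} (hωT : ∀ i ∈ ω, i ∈ T) {t : W}
    (ht : t ∈ cs.leftInvSeq ω) : t ∈ Subgroup.closure (cs.simple '' T) := by
  induction ω generalizing t with
  | nil => simp at ht
  | cons i ω ih =>
    have hi : cs.simple i ∈ Subgroup.closure (cs.simple '' T) :=
      Subgroup.subset_closure ⟨i, hωT i mem_cons_self, rfl⟩
    rcases mem_cons.mp ht with rfl | ht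
    · exact hi
    · obtain ⟨x, hx, rfl⟩ := mem_map.mp ht
      have hx := ih (fun j hj => hωT j (mem_cons_of_mem i hj)) hx
      rw [MulAut.conj_apply]
      exact mul_mem (mul_mem hi hx) (inv_mem hi)

theorem mem_closure_of_isLeftInversion {w t : W} (hw : w ∈ Subgroup.closure (cs.simple '' T))
    (ht : cs.IsLeftInversion w t) : t ∈ Subgroup.closure (cs.simple '' T) := by
  obtain ⟨ω, hωT, -, rfl⟩ := cs.exists_isReduced_of_mem_closure hw
  exact cs.mem_closure_of_mem_leftInvSeq hωT (cs.mem_leftInvSeq_of_isLeftInversion ht)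

theorem simple_mem_closure_iff {i : B} :
    cs.simple i ∈ Subgroup.closure (cs.simple '' T) ↔ cs.simple i ∈ cs.simple '' T := by
  refine ⟨fun h => ?_, fun h => Subgroup.subset_closure h⟩
  obtain ⟨ω, hωT, hω, hωi⟩ := cs.exists_isReduced_of_mem_closure h
  obtain ⟨j, rfl⟩ : ∃ j, ω = [j] := by
    rw [← List.length_eq_one_iff, ← hω.eq, hωi, length_simple]
  exact ⟨j, hωT j mem_cons_self, by simpa using hωi⟩

theorem length_lt_length_simple_mul {i : B} (hi : cs.simple i ∉ Subgroup.closure (cs.simple '' T))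
    {w : W} (hw : w ∈ Subgroup.closure (cs.simple '' T)) :
    cs.length w < cs.length (cs.simple i * w) := by
  have hinv : ¬ cs.IsLeftInversion w (cs.simple i) :=
    fun h => hi (cs.mem_closure_of_isLeftInversion hw h)
  have hne := cs.length_simple_mul_ne w i
  simp only [IsLeftInversion, cs.isReflection_simple i, true_and, not_lt] at hinv
  omega

theorem eq_of_simple_mul_simple_mem_closure {i j : B}
    (hi : cs.simple i ∉ Subgroup.closure (cs.simple '' T))
    (h : cs.simple i * cs.simple j ∈ Subgroup.closure (cs.simple '' T)) :
    cs.simple i = cs.simple j := by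
  have hlt := cs.length_lt_length_simple_mul hi h
  rw [simple_mul_simple_cancel_left, length_simple, Nat.lt_one_iff, length_eq_zero_iff,
    mul_eq_one_iff_eq_inv, inv_simple] at hlt
  exact hlt

theorem commute_of_simple_conj_mem_closure {i k : B}
    (hi : cs.simple i ∉ Subgroup.closure (cs.simple '' T)) (hk : k ∈ T)
    (h : cs.simple i * cs.simple k * cs.simple i ∈ Subgroup.closure (cs.simple '' T)) :
    Commute (cs.simple k) (cs.simple i) := by
  have hlt := cs.length_lt_length_simple_mul hi h
  rw [mul_assoc, simple_mul_simple_cancel_left] at hlt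
  have hmem : cs.simple i ∈ cs.leftInvSeq [k, i] := by
    refine cs.mem_leftInvSeq_of_isLeftInversion ⟨cs.isReflection_simple i, ?_⟩
    simpa [wordProd_cons, ← mul_assoc] using hlt
  simp only [leftInvSeq, map_cons, map_nil, mem_cons, not_mem_nil, or_false] at hmem
  rcases hmem with hik | hik
  · exact (hi (Subgroup.subset_closure ⟨k, hk, hik.symm⟩)).elim
  · rw [MulAut.conj_apply, inv_simple] at hik
    change _ = _
    conv_rhs => rw [hik]
    simp [mul_assoc]

end CoxeterSystem

theorem Subgroup.mul_mem_of_relIndex_eq_two {G : Type*} [Group G] {H K : Subgroup G} {x y : G}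
    (h : H.relIndex K = 2) (hxK : x ∈ K) (hyK : y ∈ K) (hxH : x ∉ H) (hyH : y ∉ H) :
    x * y ∈ H := by
  have hmem := (Subgroup.mul_mem_iff_of_index_two h (a := ⟨x, hxK⟩) (b := ⟨y, hyK⟩)).mpr
    (iff_of_false (mt Subgroup.mem_subgroupOf.mp hxH) (mt Subgroup.mem_subgroupOf.mp hyH))
  exact Subgroup.mem_subgroupOf.mp hmem

namespace IsCoxeterGeneratingSet

variable {S C D : Set W}

theorem exists_coxeterSystem (hS : IsCoxeterGeneratingSet W S) (hCS : C ⊆ S) :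
    ∃ (B : Type u) (M : CoxeterMatrix B) (cs : CoxeterSystem M W) (T : Set B),
      Set.range cs.simple = S ∧ cs.simple '' T = C := by
  obtain ⟨M, cs, hcs⟩ := hS
  have hrange : Set.range cs.simple = S := by
    ext x
    exact ⟨by rintro ⟨i, rfl⟩; simp [hcs], fun hx => ⟨⟨x, hx⟩, hcs _⟩⟩
  exact ⟨S, M, cs, cs.simple ⁻¹' C, hrange,
    Set.image_preimage_eq_of_subset (by rwa [hrange])⟩

theorem isOfFinOrder_of_mem (hS : IsCoxeterGeneratingSet W S) {x : W} (hx : x ∈ S) :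
    IsOfFinOrder x := by
  obtain ⟨M, cs, hcs⟩ := hS
  have hsq := cs.simple_sq ⟨x, hx⟩
  rw [hcs] at hsq
  exact isOfFinOrder_iff_pow_eq_one.mpr ⟨2, two_pos, hsq⟩

theorem subsingleton_diff_of_relIndex_eq_two (hS : IsCoxeterGeneratingSet W S) (hCD : C ⊆ D)
    (hDS : D ⊆ S) (h : (Subgroup.closure C).relIndex (Subgroup.closure D) = 2) :
    (D \ C).Subsingleton := by
  obtain ⟨B, M, cs, T, rfl, rfl⟩ := hS.exists_coxeterSystem (hCD.trans hDS)
  rintro _ ⟨hxD, hxC⟩ _ ⟨hyD, hyC⟩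
  obtain ⟨i, rfl⟩ := hDS hxD
  obtain ⟨j, rfl⟩ := hDS hyD
  rw [← cs.simple_mem_closure_iff] at hxC hyC
  exact cs.eq_of_simple_mul_simple_mem_closure hxC <| Subgroup.mul_mem_of_relIndex_eq_two h
    (Subgroup.subset_closure hxD) (Subgroup.subset_closure hyD) hxC hyC

theorem commute_of_relIndex_eq_two (hS : IsCoxeterGeneratingSet W S) (hCD : C ⊆ D)
    (hDS : D ⊆ S) (h : (Subgroup.closure C).relIndex (Subgroup.closure D) = 2) {c x : W}
    (hc : c ∈ C) (hx : x ∈ D \ C) : Commute c x := by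
  obtain ⟨B, M, cs, T, rfl, rfl⟩ := hS.exists_coxeterSystem (hCD.trans hDS)
  obtain ⟨hxD, hxC⟩ := hx
  obtain ⟨i, rfl⟩ := hDS hxD
  obtain ⟨k, hk, rfl⟩ := hc
  rw [← cs.simple_mem_closure_iff] at hxC
  have hk' : cs.simple k ∈ Subgroup.closure (cs.simple '' T) :=
    Subgroup.subset_closure ⟨k, hk, rfl⟩
  have hki : cs.simple k * cs.simple i ∉ Subgroup.closure (cs.simple '' T) := fun hmem =>
    hxC <| by simpa using mul_mem (inv_mem hk') hmem
  refine cs.commute_of_simple_conj_mem_closure hxC hk ?_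
  rw [mul_assoc]
  exact Subgroup.mul_mem_of_relIndex_eq_two h (Subgroup.subset_closure hxD)
    (mul_mem (Subgroup.subset_closure (hCD ⟨k, hk, rfl⟩)) (Subgroup.subset_closure hxD)) hxC hki

end IsCoxeterGeneratingSet

theorem IsCompleteSet.insert_of_commute {C : Set W} {a : W} (hC : IsCompleteSet W C)
    (hfin : ∀ c ∈ C, IsOfFinOrder c) (ha : IsOfFinOrder a) (hcomm : ∀ c ∈ C, Commute c a) :
    IsCompleteSet W (insert a C) := by
  have hpos {x y : W} (hxy : Commute x y) (hx : IsOfFinOrder x) (hy : IsOfFinOrder y) :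
      orderOf (x * y) ≠ 0 :=
    (hxy.isOfFinOrder_mul hx hy).orderOf_pos.ne'
  rintro s (rfl | hs) t (rfl | ht)
  · exact hpos (Commute.refl _) ha ha
  · exact hpos (hcomm t ht).symm ha (hfin t ht)
  · exact hpos (hcomm s hs) (hfin s hs) ha
  · exact hC s hs t ht

theorem SimpleGraph.Reachable.eq_of_forall_not_adj {V : Type*} {G : SimpleGraph V} {v w : V}
    (h : G.Reachable v w) (hv : ∀ u, ¬ G.Adj v u) : v = w := by
  obtain ⟨p⟩ := h
  cases p with
  | nil => rfl
  | cons hadj _ => exact absurd hadj (hv _)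

theorem separates_iff_eq {S C : Set W} {a b : W} (hCS : C ⊆ S) (hSC : S \ C = {a, b})
    (hne : a ≠ b) (hab : orderOf (a * b) = 0)
    (hC : ∀ z ∈ S, ∀ c ∈ C, orderOf (z * c) ≠ 0) (T : Set W) (hTS : T ⊆ S) :
    Separates W S T ↔ T = C := by
  constructor
  · rintro ⟨x, hx, y, hy, hxy⟩
    have hxne : x ≠ y := by rintro rfl; exact hxy (SimpleGraph.Reachable.refl x)
    have hxy0 : orderOf (x * y) = 0 := by
      by_contra h0; exact hxy (SimpleGraph.Adj.reachable ⟨hxne, hx, hy, h0⟩)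
    have hyx0 : orderOf (y * x) = 0 := by
      by_contra h0
      exact hxy (show (presGraph W (S \ T)).Adj y x from ⟨hxne.symm, hy, hx, h0⟩).reachable.symm
    have hxC : x ∉ C := fun hxC => hC y hy.1 x hxC hyx0
    have hyC : y ∉ C := fun hyC => hC x hx.1 y hyC hxy0
    refine Set.Subset.antisymm (fun t ht => ?_) (fun c hc => ?_)
    · by_contra htC
      have ht' : t ∈ S \ C := ⟨hTS ht, htC⟩
      have hx' : x ∈ S \ C := ⟨hx.1, hxC⟩
      have hy' : y ∈ S \ C := ⟨hy.1, hyC⟩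
      rw [hSC] at ht' hx' hy'
      obtain rfl | rfl := ht' <;> obtain rfl | rfl := hx' <;> obtain rfl | rfl := hy' <;>
        simp_all
    · by_contra hcT
      have hc' : c ∈ S \ T := ⟨hCS hc, hcT⟩
      have hxc : (presGraph W (S \ T)).Adj x c :=
        ⟨fun h => hxC (h ▸ hc), hx, hc', hC x hx.1 c hc⟩
      have hyc : (presGraph W (S \ T)).Adj y c :=
        ⟨fun h => hyC (h ▸ hc), hy, hc', hC y hy.1 c hc⟩
      exact hxy (hxc.reachable.trans hyc.reachable.symm)
  · rintro rfl
    have ha : a ∈ S \ T := hSC ▸ Set.mem_insert a {b}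
    have hb : b ∈ S \ T := hSC ▸ Set.mem_insert_of_mem a rfl
    refine ⟨a, ha, b, hb, fun hreach => hne (hreach.eq_of_forall_not_adj ?_)⟩
    rintro u ⟨hau, -, hu, hord⟩
    rw [hSC] at hu
    obtain rfl | rfl := hu
    · exact hau rfl
    · exact hord hab

theorem IsCoxeterGeneratingSet.exists_diff_eq_singleton_of_relIndex_eq_two {S C D : Set W}
    (hS : IsCoxeterGeneratingSet W S) (hC : IsCompleteSet W C) (hCD : C ⊆ D) (hDS : D ⊆ S)
    (hDC : (D \ C).Nonempty) (h : (Subgroup.closure C).relIndex (Subgroup.closure D) = 2) :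
    ∃ a, D \ C = {a} ∧ (∀ c ∈ C, Commute c a) ∧ IsCompleteSet W D := by
  obtain ⟨a, ha⟩ := Set.exists_eq_singleton_iff_nonempty_subsingleton.mpr
    ⟨hDC, hS.subsingleton_diff_of_relIndex_eq_two hCD hDS h⟩
  have haD : a ∈ D \ C := by simp [ha]
  have hcomm : ∀ c ∈ C, Commute c a := fun c hc =>
    hS.commute_of_relIndex_eq_two hCD hDS h hc haD
  have hD : D = insert a C := by rw [Set.insert_eq, ← ha, Set.sdiff_union_of_subset hCD]
  have hfin : ∀ c ∈ C, IsOfFinOrder c := fun c hc => hS.isOfFinOrder_of_mem (hDS (hCD hc))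
  exact ⟨a, ha, hcomm,
    hD ▸ hC.insert_of_commute hfin (hS.isOfFinOrder_of_mem (hDS haD.1)) hcomm⟩

theorem dihedral_splitting_structure_general {W : Type u} [Group W] (S A C B : Set W)
    (hcox : IsCoxeterGeneratingSet W S)
    (hsep : IsSeparation W S A C B) (hC : IsCompleteSet W C)
    (hA : (Subgroup.closure C).relIndex (Subgroup.closure A) = 2)
    (hB : (Subgroup.closure C).relIndex (Subgroup.closure B) = 2) :
    ∃ a b : W, A \ C = {a} ∧ B \ C = {b} ∧
      (∀ c ∈ C, Commute c a) ∧ (∀ c ∈ C, Commute c b) ∧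
      IsCompleteSet W A ∧ IsCompleteSet W B ∧
      (∀ T ⊆ S, (Separates W S T ↔ T = C)) := by
  obtain ⟨hunion, hinter, hAC, hBC, hinf⟩ := hsep
  have hCA : C ⊆ A := hinter ▸ Set.inter_subset_left
  have hCB : C ⊆ B := hinter ▸ Set.inter_subset_right
  have hAS : A ⊆ S := hunion ▸ Set.subset_union_left
  have hBS : B ⊆ S := hunion ▸ Set.subset_union_right
  obtain ⟨a, ha, hcommA, hcompA⟩ :=
    hcox.exists_diff_eq_singleton_of_relIndex_eq_two hC hCA hAS hAC hA
  obtain ⟨b, hb, hcommB, hcompB⟩ :=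
    hcox.exists_diff_eq_singleton_of_relIndex_eq_two hC hCB hBS hBC hB
  have haAC : a ∈ A \ C := by simp [ha]
  have hbBC : b ∈ B \ C := by simp [hb]
  refine ⟨a, b, ha, hb, hcommA, hcommB, hcompA, hcompB,
    separates_iff_eq (hCA.trans hAS) ?_ ?_ (hinf a haAC b hbBC) ?_⟩
  · rw [← hunion, Set.union_sdiff_distrib, ha, hb, Set.singleton_union]
  · rintro rfl
    exact haAC.2 (hinter ▸ ⟨haAC.1, hbBC.1⟩)
  · rintro z hz c hc
    rcases hunion ▸ hz with hz | hz
    exacts [hcompA z hz c (hCA hc), hcompB z hz c (hCB hc)]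

/-- dihedral case of Theorem 3.5. Let `(W,S)` be a Coxeter system of
finite rank and `(A,C,B)` a separation of `S` with `C` complete such that `⟨C⟩` has
index two in `⟨A⟩` and in `⟨B⟩`.  Then `A − C = {a}` and `B − C = {b}` are singletons,
every element of `C` commutes with `a` and with `b` (so `⟨A⟩ = ⟨a⟩ × ⟨C⟩` and
`⟨B⟩ = ⟨b⟩ × ⟨C⟩`), the sets `A` and `B` are complete, and `C` is the unique subset
of `S` separating `S`. -/
theorem dihedral_splitting_structure {W : Type u} [Group W] (S A C B : Set W)
    (hcox : IsCoxeterGeneratingSet W S) (hfin : S.Finite)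
    (hsep : IsSeparation W S A C B) (hC : IsCompleteSet W C)
    (hA : (Subgroup.closure C).relIndex (Subgroup.closure A) = 2)
    (hB : (Subgroup.closure C).relIndex (Subgroup.closure B) = 2) :
    ∃ a b : W, A \ C = {a} ∧ B \ C = {b} ∧
      (∀ c ∈ C, Commute c a) ∧ (∀ c ∈ C, Commute c b) ∧
      IsCompleteSet W A ∧ IsCompleteSet W B ∧
      (∀ T ⊆ S, (Separates W S T ↔ T = C)) :=
  dihedral_splitting_structure_general S A C B hcox hsep hC hA hB
end

section
/- Let (W,S) be a Coxeter system of finite rank. Then (W,S) is chordal if and only if every maximal subset of S that is not separated by a complete subset is itself complete; equivalently, every vertex group of a visual reduced JSJ decomposition of (W,S) over 𝓕𝓐 is a complete visual subgroup of (W,S). -/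
universe u

variable {W : Type u} [Group W]

/-!
Both sides only involve the presentation diagram `Γ`, a finite graph. If `Γ` is chordal, Dirac's
lemma says that minimal vertex separators are cliques. For two non-adjacent vertices `a, b` of a
set `R`, the set `R \ {a, b}` separates them inside `R`, so some minimal separator does, and it is
a clique: hence a set that no complete subset separates is complete, maximal or not.
Conversely, no clique separates the vertex set of a chordless cycle (two clique vertices on the
two arcs between `a` and `b` would span a chord). That vertex set lies in a maximal set not
separated by a complete subset, which is complete by hypothesis, and a cycle of length at least
four on a complete vertex set has a chord.
-/

namespace SimpleGraph

variable {V : Type*} {G : SimpleGraph V}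

/-- Unlike `G.induce A`, this keeps the vertex type `V`, so its walks are walks between
vertices of `V`. -/
def inducedOn (G : SimpleGraph V) (A : Set V) : SimpleGraph V where
  Adj x y := G.Adj x y ∧ x ∈ A ∧ y ∈ A
  symm := ⟨fun _ _ h => ⟨h.1.symm, h.2.2, h.2.1⟩⟩
  loopless := ⟨fun x h => G.loopless.irrefl x h.1⟩

def IsCliqueSeparated (G : SimpleGraph V) (R : Set V) : Prop :=
  ∃ T ⊆ R, G.IsClique T ∧ ∃ a ∈ R \ T, ∃ b ∈ R \ T, ¬(G.inducedOn (R \ T)).Reachable a b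

lemma inducedOn_le (A : Set V) : G.inducedOn A ≤ G := fun _ _ h => h.1

lemma inducedOn_mono {A B : Set V} (h : A ⊆ B) : G.inducedOn A ≤ G.inducedOn B :=
  fun _ _ hxy => ⟨hxy.1, h hxy.2.1, h hxy.2.2⟩

namespace Walk

lemma mem_of_mem_support_inducedOn {A : Set V} {u v : V} (p : (G.inducedOn A).Walk u v)
    (hu : u ∈ A) : ∀ z ∈ p.support, z ∈ A := by
  induction p with
  | nil => simpa using hu
  | cons h _ ih => simpa [hu] using ih h.2.2

lemma reachable_inducedOn {A : Set V} {u v : V} (p : G.Walk u v)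
    (hp : ∀ z ∈ p.support, z ∈ A) : (G.inducedOn A).Reachable u v := by
  induction p with
  | nil => rfl
  | cons h q ih =>
    have hq : ∀ z ∈ q.support, z ∈ A := fun z hz => hp z (List.mem_cons_of_mem _ hz)
    have hadj : (G.inducedOn A).Adj _ _ := ⟨h, hp _ List.mem_cons_self, hq _ q.start_mem_support⟩
    exact hadj.reachable.trans (ih hq)

lemma IsPath.start_notMem_support_tail {u v : V} {p : G.Walk u v} (hp : p.IsPath) :
    u ∉ p.support.tail := by
  have h := hp.support_nodup
  rw [← p.cons_tail_support, List.nodup_cons] at h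
  exact h.1

lemma IsPath.isCycle_append_reverse {x y : V} {p q : G.Walk x y} (hp : p.IsPath)
    (hq : q.IsPath) (hmeet : ∀ z ∈ p.support, z ∈ q.support → z = x ∨ z = y)
    (hlen : 1 < p.length) : (p.append q.reverse).IsCycle := by
  refine hp.isCycle_append hq.reverse (fun z hzp hzq => ?_) (.inl hlen)
  have hzq' : z ∈ q.support := by simpa using List.mem_of_mem_tail hzq
  rcases hmeet z (List.mem_of_mem_tail hzp) hzq' with rfl | rfl
  · exact hp.start_notMem_support_tail hzp
  · exact hq.reverse.start_notMem_support_tail hzq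

lemma mem_edges_of_length_eq_dist {u v x y : V} {p : G.Walk u v} (hp : p.length = G.dist u v)
    (hx : x ∈ p.support) (hy : y ∈ p.support) (hxy : G.Adj x y) : s(x, y) ∈ p.edges := by
  classical
  induction p with
  | nil => simp_all
  | @cons a b c h q ih =>
    have hq : q.length = G.dist b c := length_eq_dist_of_subwalk hp (q.isSubwalk_cons h)
    -- the shortcut `a - y` past the part of `q` before `y` cannot shorten a shortest walk
    have first : ∀ {y}, y ∈ q.support → G.Adj a y → s(a, y) ∈ (cons h q).edges := by
      intro y hy hay
      have hshort := dist_le (cons hay (q.dropUntil y hy))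
      have hsplit := congrArg length (q.take_spec hy)
      simp only [length_cons, length_append] at hp hshort hsplit
      obtain rfl : b = y := eq_of_length_eq_zero (p := q.takeUntil y hy) (by omega)
      simp
    rw [support_cons, List.mem_cons] at hx hy
    rcases hx with rfl | hx <;> rcases hy with rfl | hy
    · exact (hxy.ne rfl).elim
    · exact first hy hxy
    · exact Sym2.eq_swap ▸ first hx hxy.symm
    · exact List.mem_cons_of_mem _ (ih hq hx hy)

lemma reachable_or_exists_adj {U : Set V} {t a b : V}
    (p : (G.inducedOn (insert t U)).Walk a b) (ha : a ∈ U) :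
    (G.inducedOn U).Reachable a b ∨ ∃ z, (G.inducedOn U).Reachable a z ∧ G.Adj z t := by
  induction p with
  | nil => exact Or.inl .rfl
  | @cons a a' b h q ih =>
    by_cases ha' : a' = t
    · subst ha'
      exact Or.inr ⟨a, .rfl, h.1⟩
    have hadj : (G.inducedOn U).Adj a a' :=
      ⟨h.1, ha, (Set.mem_insert_iff.1 h.2.2).resolve_left ha'⟩
    exact (ih hadj.2.2).imp hadj.reachable.trans
      fun ⟨z, hz, hzt⟩ => ⟨z, hadj.reachable.trans hz, hzt⟩

end Walk

lemma Reachable.mem_of_inducedOn {A : Set V} {u v : V} (h : (G.inducedOn A).Reachable u v)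
    (hu : u ∈ A) : v ∈ A :=
  h.elim fun p => p.mem_of_mem_support_inducedOn hu v p.end_mem_support

lemma exists_adj_of_reachable_inducedOn_insert {U : Set V} {t a b : V} (ha : a ∈ U)
    (hab : ¬(G.inducedOn U).Reachable a b) (h : (G.inducedOn (insert t U)).Reachable a b) :
    ∃ z, (G.inducedOn U).Reachable a z ∧ G.Adj z t :=
  h.elim fun p => (p.reachable_or_exists_adj ha).resolve_left hab

lemma reachable_inducedOn_insert_insert {U : Set V} {a x y zx zy : V}
    (hzx : (G.inducedOn U).Reachable a zx) (hzy : (G.inducedOn U).Reachable a zy)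
    (hx : G.Adj x zx) (hy : G.Adj zy y) :
    (G.inducedOn (insert x (insert y {z | (G.inducedOn U).Reachable a z}))).Reachable x y := by
  classical
  set C := {z | (G.inducedOn U).Reachable a z}
  obtain ⟨r⟩ := hzx.symm.trans hzy
  have hr : (G.inducedOn C).Reachable zx zy := by
    refine (r.mapLe (inducedOn_le U)).reachable_inducedOn fun z hz => ?_
    rw [Walk.support_mapLe_eq_support] at hz
    exact hzx.trans (r.takeUntil z hz).reachable
  have hC : C ⊆ insert x (insert y C) := (Set.subset_insert _ _).trans (Set.subset_insert _ _)
  have hxzx : (G.inducedOn (insert x (insert y C))).Adj x zx := ⟨hx, Set.mem_insert _ _, hC hzx⟩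
  have hzyy : (G.inducedOn (insert x (insert y C))).Adj zy y :=
    ⟨hy, hC hzy, Set.mem_insert_of_mem _ (Set.mem_insert _ _)⟩
  exact hxzx.reachable.trans ((hr.mono (inducedOn_mono hC)).trans hzyy.reachable)

lemma mem_edges_or_mem_edges_of_adj {A B : Set V} {x y u w : V}
    (hAB : ∀ u ∈ A, ∀ w ∈ B, u ≠ w ∧ ¬G.Adj u w)
    {p : (G.inducedOn (insert x (insert y A))).Walk x y}
    (hp : p.length = (G.inducedOn (insert x (insert y A))).dist x y)
    {q : (G.inducedOn (insert x (insert y B))).Walk x y}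
    (hq : q.length = (G.inducedOn (insert x (insert y B))).dist x y)
    (hu : u ∈ p.support ∨ u ∈ q.support) (hw : w ∈ p.support ∨ w ∈ q.support)
    (huw : G.Adj u w) : s(u, w) ∈ p.edges ∨ s(u, w) ∈ q.edges := by
  have hpA := p.mem_of_mem_support_inducedOn (Set.mem_insert x _)
  have hqB := q.mem_of_mem_support_inducedOn (Set.mem_insert x _)
  have inP : u ∈ p.support → w ∈ p.support → s(u, w) ∈ p.edges := fun h₁ h₂ =>
    p.mem_edges_of_length_eq_dist hp h₁ h₂ ⟨huw, hpA u h₁, hpA w h₂⟩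
  have inQ : u ∈ q.support → w ∈ q.support → s(u, w) ∈ q.edges := fun h₁ h₂ =>
    q.mem_edges_of_length_eq_dist hq h₁ h₂ ⟨huw, hqB u h₁, hqB w h₂⟩
  have mixed : ∀ u w, G.Adj u w → u ∈ p.support → w ∈ q.support →
      u ∈ q.support ∨ w ∈ p.support := by
    intro u w huw hu hw
    rcases hpA u hu with rfl | rfl | huA
    · exact .inl q.start_mem_support
    · exact .inl q.end_mem_support
    rcases hqB w hw with rfl | rfl | hwB
    · exact .inr p.start_mem_support
    · exact .inr p.end_mem_support
    exact ((hAB u huA w hwB).2 huw).elim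
  rcases hu with hu | hu <;> rcases hw with hw | hw
  · exact .inl (inP hu hw)
  · exact (mixed u w huw hu hw).elim (.inr <| inQ · hw) (.inl <| inP hu ·)
  · exact (mixed w u huw.symm hw hu).elim (.inr <| inQ hu ·) (.inl <| inP · hw)
  · exact .inr (inQ hu hw)

/-- Shortest `x`–`y` paths through `A` and through `B` close up to a cycle of length at least
four without chords. -/
theorem IsChordalGraph.adj_of_reachable_of_reachable (hG : G.IsChordalGraph) {A B : Set V}
    {x y : V} (hAB : ∀ u ∈ A, ∀ w ∈ B, u ≠ w ∧ ¬G.Adj u w) (hxy : x ≠ y)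
    (hA : (G.inducedOn (insert x (insert y A))).Reachable x y)
    (hB : (G.inducedOn (insert x (insert y B))).Reachable x y) : G.Adj x y := by
  by_contra hnadj
  obtain ⟨p, hp, hpd⟩ := hA.exists_path_of_dist
  obtain ⟨q, hq, hqd⟩ := hB.exists_path_of_dist
  have hmeet : ∀ z ∈ p.support, z ∈ q.support → z = x ∨ z = y := by
    intro z hzp hzq
    rcases p.mem_of_mem_support_inducedOn (Set.mem_insert x _) z hzp with h | h | hzA
    · exact .inl h
    · exact .inr h
    rcases q.mem_of_mem_support_inducedOn (Set.mem_insert x _) z hzq with h | h | hzB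
    · exact .inl h
    · exact .inr h
    exact ((hAB z hzA z hzB).1 rfl).elim
  set p' := p.mapLe (inducedOn_le _)
  set q' := q.mapLe (inducedOn_le _)
  have hlong : ∀ {X : Set V} (r : (G.inducedOn X).Walk x y), 1 < r.length := fun r =>
    (dist_le r).trans_lt' (r.reachable.one_lt_dist_of_ne_of_not_adj hxy fun h => hnadj h.1)
  have hcyc : (p'.append q'.reverse).IsCycle :=
    (hp.mapLe _).isCycle_append_reverse (hq.mapLe _) (by simpa [p', q'] using hmeet)
      (by simpa [p'] using hlong p)
  have hlen : 4 ≤ (p'.append q'.reverse).length := by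
    have := hlong p
    have := hlong q
    simp only [p', q', Walk.length_append, Walk.length_reverse, Walk.length_mapLe]
    omega
  obtain ⟨u, w, hu, hw, huw, hne⟩ := hG x _ hcyc hlen
  simp only [p', q', Walk.mem_support_append_iff, Walk.support_reverse, List.mem_reverse,
    Walk.support_mapLe_eq_support] at hu hw
  simp only [p', q', Walk.edges_append, Walk.edges_reverse, List.mem_append, List.mem_reverse,
    Walk.edges_mapLe_eq_edges] at hne
  exact hne (mem_edges_or_mem_edges_of_adj hAB hpd hqd hu hw huw)

/-- Dirac's lemma: a minimal vertex set separating `a` from `b` in a chordal graph is a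
clique. -/
theorem IsChordalGraph.isClique_of_forall_reachable_insert (hG : G.IsChordalGraph)
    {U T : Set V} {a b : V} (ha : a ∈ U) (hb : b ∈ U) (hab : ¬(G.inducedOn U).Reachable a b)
    (hT : ∀ t ∈ T, (G.inducedOn (insert t U)).Reachable a b) : G.IsClique T := by
  intro x hx y hy hxy
  have hba : ¬(G.inducedOn U).Reachable b a := fun h => hab h.symm
  have hAB : ∀ u ∈ {z | (G.inducedOn U).Reachable a z}, ∀ w ∈ {z | (G.inducedOn U).Reachable b z},
      u ≠ w ∧ ¬G.Adj u w := by
    intro u hu w hw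
    refine ⟨fun h => hab (hu.trans (h ▸ hw.symm)), fun huw => hab ?_⟩
    have : (G.inducedOn U).Adj u w := ⟨huw, hu.mem_of_inducedOn ha, hw.mem_of_inducedOn hb⟩
    exact hu.trans (this.reachable.trans hw.symm)
  obtain ⟨_, hax, hxa⟩ := exists_adj_of_reachable_inducedOn_insert ha hab (hT x hx)
  obtain ⟨_, hay, hya⟩ := exists_adj_of_reachable_inducedOn_insert ha hab (hT y hy)
  obtain ⟨_, hbx, hxb⟩ := exists_adj_of_reachable_inducedOn_insert hb hba (hT x hx).symm
  obtain ⟨_, hby, hyb⟩ := exists_adj_of_reachable_inducedOn_insert hb hba (hT y hy).symm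
  exact hG.adj_of_reachable_of_reachable hAB hxy
    (reachable_inducedOn_insert_insert hax hay hxa.symm hya)
    (reachable_inducedOn_insert_insert hbx hby hxb.symm hyb)

lemma not_reachable_inducedOn_pair {a b : V} (hab : a ≠ b) (hnadj : ¬G.Adj a b) :
    ¬(G.inducedOn {a, b}).Reachable a b := by
  rintro ⟨p⟩
  obtain ⟨w, haw, -, -⟩ := p.exists_eq_cons_of_ne hab
  rcases haw.2.2 with rfl | rfl
  · exact haw.ne rfl
  · exact hnadj haw.1

theorem IsChordalGraph.isClique_of_not_isCliqueSeparated (hG : G.IsChordalGraph) {R : Set V}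
    (hR : R.Finite) (hsep : ¬G.IsCliqueSeparated R) : G.IsClique R := by
  intro a ha b hb hab
  by_contra hnadj
  set 𝒯 := {T | T ⊆ R \ {a, b} ∧ ¬(G.inducedOn (R \ T)).Reachable a b}
  have h𝒯 : R \ {a, b} ∈ 𝒯 := by
    refine ⟨subset_rfl, fun h => not_reachable_inducedOn_pair hab hnadj (h.mono ?_)⟩
    exact inducedOn_mono fun z ⟨hzR, hz⟩ => by_contra fun h => hz ⟨hzR, h⟩
  obtain ⟨T, -, hTmin⟩ := (hR.sdiff.finite_subsets.subset fun T hT => hT.1).exists_le_minimal h𝒯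
  obtain ⟨hT, hTab⟩ := hTmin.prop
  have haT : a ∈ R \ T := ⟨ha, fun h => (hT h).2 (Set.mem_insert _ _)⟩
  have hbT : b ∈ R \ T := ⟨hb, fun h => (hT h).2 (Set.mem_insert_of_mem _ rfl)⟩
  refine hsep ⟨T, hT.trans Set.sdiff_subset, ?_, a, haT, b, hbT, hTab⟩
  refine hG.isClique_of_forall_reachable_insert haT hbT hTab fun t ht => by_contra fun h => ?_
  have hdiff : R \ (T \ {t}) = insert t (R \ T) := by
    ext z
    by_cases hz : z = t
    · simp [hz, (hT ht).1, ht]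
    · simp [hz]
  have := hTmin.le_of_le ⟨Set.sdiff_subset.trans hT, hdiff ▸ h⟩ Set.sdiff_subset ht
  exact this.2 rfl

namespace Walk

variable {v : V}

lemma IsCycle.eq_or_eq_of_mem_takeUntil_of_mem_dropUntil [DecidableEq V] {a : V}
    {c : G.Walk a a} (hc : c.IsCycle) {b z : V} (hb : b ∈ c.support)
    (hzp : z ∈ (c.takeUntil b hb).support) (hzq : z ∈ (c.dropUntil b hb).support) :
    z = a ∨ z = b := by
  have hsplit := congrArg (fun p => p.support.tail) (c.take_spec hb)
  simp only [tail_support_append] at hsplit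
  have hnd := hc.support_nodup
  rw [← hsplit, List.nodup_append] at hnd
  by_contra! hz
  rw [mem_support_iff] at hzp hzq
  exact hnd.2.2 z (hzp.resolve_left hz.1) z (hzq.resolve_left hz.2) rfl

/-- Cut the cycle at `a` and `b` into two arcs: two vertices of the clique `T` on different arcs
would span a chord, so one of the arcs avoids `T`. -/
theorem IsCycle.not_isCliqueSeparated {c : G.Walk v v} (hc : c.IsCycle) (hchord : ¬c.HasChord) :
    ¬G.IsCliqueSeparated {z | z ∈ c.support} := by
  classical
  rintro ⟨T, hTc, hT, a, ⟨ha, haT⟩, b, ⟨hb, hbT⟩, hab⟩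
  apply hab
  have hb' : b ∈ (c.rotate a ha).support := (c.mem_support_rotate_iff a ha).2 hb
  set p := (c.rotate a ha).takeUntil b hb'
  set q := (c.rotate a ha).dropUntil b hb'
  have hmeet : ∀ z ∈ T, z ∈ p.support → z ∉ q.support := fun z hz hzp hzq =>
    ((hc.rotate ha).eq_or_eq_of_mem_takeUntil_of_mem_dropUntil hb' hzp hzq).elim
      (fun h => haT (h ▸ hz)) (fun h => hbT (h ▸ hz))
  have hedge : ∀ z₁ ∈ T, ∀ z₂ ∈ T, z₁ ≠ z₂ → s(z₁, z₂) ∈ p.edges ∨ s(z₁, z₂) ∈ q.edges := by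
    intro z₁ h₁ z₂ h₂ hne
    have hc : s(z₁, z₂) ∈ c.edges :=
      by_contra fun h => hchord ⟨z₁, z₂, hTc h₁, hTc h₂, hT h₁ h₂ hne, h⟩
    rw [← (c.rotate_edges a ha).perm.mem_iff, ← (c.rotate a ha).take_spec hb', edges_append,
      List.mem_append] at hc
    exact hc
  have hside : (∀ z ∈ p.support, z ∉ T) ∨ (∀ z ∈ q.support, z ∉ T) := by
    by_contra! h
    obtain ⟨⟨z₁, h₁p, h₁⟩, ⟨z₂, h₂q, h₂⟩⟩ := h
    by_cases hne : z₁ = z₂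
    · exact hmeet z₁ h₁ h₁p (hne ▸ h₂q)
    rcases hedge z₁ h₁ z₂ h₂ hne with he | he
    · exact hmeet z₂ h₂ (p.snd_mem_support_of_mem_edges he) h₂q
    · exact hmeet z₁ h₁ h₁p (q.fst_mem_support_of_mem_edges he)
  have hcyc : ∀ z ∈ (c.rotate a ha).support, z ∈ c.support := fun z hz =>
    (c.mem_support_rotate_iff a ha).1 hz
  rcases hside with h | h
  · exact p.reachable_inducedOn fun z hz =>
      ⟨hcyc z (support_takeUntil_subset_support _ _ hz), h z hz⟩
  · refine (q.reachable_inducedOn fun z hz => ?_).symm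
    exact ⟨hcyc z (support_dropUntil_subset_support _ _ hz), h z hz⟩

theorem IsCycle.hasChord_of_isClique {c : G.Walk v v} (hc : c.IsCycle) (h4 : 4 ≤ c.length)
    (hK : G.IsClique {z | z ∈ c.support}) : c.HasChord := by
  have hinj {i j : ℕ} (hi : 1 ≤ i ∧ i ≤ c.length) (hj : 1 ≤ j ∧ j ≤ c.length) (hij : i ≠ j) :
      c.getVert i ≠ c.getVert j := fun h => hij (hc.getVert_injOn hi hj h)
  have hv : c.getVert 2 ≠ v := by
    rw [Ne, hc.getVert_endpoint_iff (by omega)]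
    omega
  refine ⟨v, c.getVert 2, c.start_mem_support, c.getVert_mem_support 2,
    hK c.start_mem_support (c.getVert_mem_support 2) hv.symm, fun he => ?_⟩
  -- the cycle edges at `v` go to `getVert 1` and `getVert (length - 1)`, not to `getVert 2`
  have hN : c.getVert 2 ∈ c.toSubgraph.neighborSet v := adj_toSubgraph_iff_mem_edges.2 he
  rw [hc.neighborSet_toSubgraph_endpoint, snd, penultimate] at hN
  rcases hN with h | h
  · exact hinj (by omega) (by omega) (by omega) h
  · exact hinj (by omega) (by omega) (by omega) h

end Walk

theorem isChordalGraph_iff_forall_maximal_isClique {S : Set V} (hS : S.Finite)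
    (hGS : G.support ⊆ S) :
    G.IsChordalGraph ↔
      ∀ R, Maximal (fun R => R ⊆ S ∧ ¬G.IsCliqueSeparated R) R → G.IsClique R := by
  refine ⟨fun hG R hR => hG.isClique_of_not_isCliqueSeparated (hS.subset hR.1.1) hR.1.2,
    fun h v c hc h4 => by_contra fun hchord => ?_⟩
  have hcS : {z | z ∈ c.support} ⊆ S := fun z hz =>
    hGS (mem_support_of_mem_walk_support c hc.not_nil hz)
  obtain ⟨R, hcR, hR⟩ := (hS.finite_subsets.subset fun R hR => hR.1).exists_le_maximal
    (show {z | z ∈ c.support} ∈ {R | R ⊆ S ∧ ¬G.IsCliqueSeparated R} from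
      ⟨hcS, hc.not_isCliqueSeparated hchord⟩)
  exact hchord (hc.hasChord_of_isClique h4 ((h R hR).subset hcR))

end SimpleGraph

lemma IsCoxeterGeneratingSet.mul_self_eq_one {S : Set W} (hcox : IsCoxeterGeneratingSet W S)
    {s : W} (hs : s ∈ S) : s * s = 1 := by
  obtain ⟨M, cs, hsimple⟩ := hcox
  simpa [hsimple ⟨s, hs⟩] using cs.simple_mul_simple_self ⟨s, hs⟩

lemma presGraph_eq_inducedOn {S A : Set W} (hA : A ⊆ S) :
    presGraph W A = (presGraph W S).inducedOn A := by
  ext s t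
  exact ⟨fun ⟨hst, hs, ht, h⟩ => ⟨⟨hst, hA hs, hA ht, h⟩, hs, ht⟩,
    fun ⟨⟨hst, _, _, h⟩, hs, ht⟩ => ⟨hst, hs, ht, h⟩⟩

lemma support_presGraph_subset (S : Set W) : (presGraph W S).support ⊆ S :=
  fun _ ⟨_, h⟩ => h.2.1

lemma IsCoxeterGeneratingSet.isCompleteSet_iff {S T : Set W} (hcox : IsCoxeterGeneratingSet W S)
    (hT : T ⊆ S) : IsCompleteSet W T ↔ (presGraph W S).IsClique T := by
  refine ⟨fun h s hs t ht hst => ⟨hst, hT hs, hT ht, h s hs t ht⟩, fun h s hs t ht => ?_⟩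
  rcases eq_or_ne s t with rfl | hst
  · simp [hcox.mul_self_eq_one (hT hs)]
  · exact (h hs ht hst).2.2.2

lemma IsCoxeterGeneratingSet.separatedByComplete_iff {S R : Set W}
    (hcox : IsCoxeterGeneratingSet W S) (hR : R ⊆ S) :
    SeparatedByComplete W R ↔ (presGraph W S).IsCliqueSeparated R := by
  refine exists_congr fun T => and_congr_right fun hTR => ?_
  rw [hcox.isCompleteSet_iff (hTR.trans hR), Separates,
    presGraph_eq_inducedOn (Set.sdiff_subset.trans hR)]

/-- Theorem 4.1. A Coxeter system `(W,S)` of finite rank is chordal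
if and only if every maximal subset of `S` that is not separated by a complete subset
is itself complete (these maximal subsets generate exactly the vertex groups of a
visual reduced JSJ decomposition of `(W,S)` over 𝓕𝓐). -/
theorem chordal_iff_vertex_groups_complete {W : Type u} [Group W] (S : Set W)
    (hcox : IsCoxeterGeneratingSet W S) (hfin : S.Finite) :
    (presGraph W S).IsChordalGraph ↔
      ∀ R, R ⊆ S → ¬ SeparatedByComplete W R →
        (∀ R', R ⊆ R' → R' ⊆ S → ¬ SeparatedByComplete W R' → R' = R) →
        IsCompleteSet W R := by
  have hsep (R : Set W) (hR : R ⊆ S) := (hcox.separatedByComplete_iff hR).not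
  rw [SimpleGraph.isChordalGraph_iff_forall_maximal_isClique hfin (support_presGraph_subset S)]
  refine forall_congr' fun R => ⟨fun h hRS hR hmax => ?_, fun h hR => ?_⟩
  · rw [hcox.isCompleteSet_iff hRS]
    refine h ⟨⟨hRS, (hsep R hRS).1 hR⟩, fun R' hR' hRR' => ?_⟩
    exact (hmax R' hRR' hR'.1 ((hsep R' hR'.1).2 hR'.2)).le
  · rw [← hcox.isCompleteSet_iff hR.1.1]
    refine h hR.1.1 ((hsep R hR.1.1).2 hR.1.2) fun R' hRR' hR'S hR' => ?_
    exact hR.eq_of_ge ⟨hR'S, (hsep R' hR'S).1 hR'⟩ hRR'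
end
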